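/- Let $A \in \mathbb{R}^{m \times n}$ have full column rank, with rows $a_1^T, \dots, a_m^T$, and let $x^*$ be the unique solution of $A x = b$. Let $\sigma_{\min}(A)$ denote the smallest singular value of $A$. If at each step a row $j$ is chosen with probability $\|a_j\|^2/\|A\|_F^2$ independently and $x_{k+1} = x_k + \frac{b_j - a_j^T x_k}{\|a_j\|^2} a_j$, then $\mathbb{E}\|x_k - x^*\|^2 \le \left(1 - \frac{\sigma_{\min}(A)^2}{\|A\|_F^2}\right)^k \|x_0 - x^*\|^2$ for all $k \ge 0$. -/

import Mathlib

/-! A Kaczmarz step with row `a_j` projects the error `x - x*` orthogonally onto `a_jᗮ`, which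
removes `⟪a_j, x - x*⟫² / ‖a_j‖²` from `‖x - x*‖²`. Averaging over `j` with weights
`‖a_j‖² / ‖A‖_F²` therefore removes `‖A (x - x*)‖² / ‖A‖_F² ≥ σ_min² ‖x - x*‖² / ‖A‖_F²`, so each
step contracts the expected squared error by `1 - σ_min² / ‖A‖_F²`; summing out the last row
choice and inducting on `k` gives the power. -/

open scoped RealInnerProductSpace

noncomputable def mulE {m n : ℕ} (M : Matrix (Fin m) (Fin n) ℝ) (v : EuclideanSpace ℝ (Fin n)) :
    EuclideanSpace ℝ (Fin m) := (WithLp.equiv 2 _).symm (M.mulVec ((WithLp.equiv 2 _) v))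

noncomputable def rowE {m n : ℕ} (M : Matrix (Fin m) (Fin n) ℝ) (j : Fin m) :
    EuclideanSpace ℝ (Fin n) := (WithLp.equiv 2 _).symm (M j)

/-- The smallest singular value of `A`, as the infimum of `‖Av‖` over unit vectors. -/
noncomputable def sminE {m n : ℕ} (A : Matrix (Fin m) (Fin n) ℝ) : ℝ :=
  ⨅ v : {v : EuclideanSpace ℝ (Fin n) // ‖v‖ = 1}, ‖mulE A (v : EuclideanSpace ℝ (Fin n))‖

/-- One Kaczmarz step using row `j`. -/
noncomputable def kacStep {m n : ℕ} (A : Matrix (Fin m) (Fin n) ℝ) (b : Fin m → ℝ)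
    (j : Fin m) (x : EuclideanSpace ℝ (Fin n)) : EuclideanSpace ℝ (Fin n) :=
  x + ((b j - ⟪rowE A j, x⟫) / ‖rowE A j‖ ^ 2) • rowE A j

/-- The randomized Kaczmarz iterates determined by a sequence `ω` of chosen rows. -/
noncomputable def kacIter {m n : ℕ} (A : Matrix (Fin m) (Fin n) ℝ) (b : Fin m → ℝ)
    (x0 : EuclideanSpace ℝ (Fin n)) : (k : ℕ) → (Fin k → Fin m) → EuclideanSpace ℝ (Fin n)
  | 0, _ => x0
  | (k + 1), ω => kacStep A b (ω (Fin.last k)) (kacIter A b x0 k (fun i => ω i.castSucc))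

theorem norm_sq_mul_norm_sub_inner_div_smul_sq {E : Type*} [NormedAddCommGroup E]
    [InnerProductSpace ℝ E] (a e : E) :
    ‖a‖ ^ 2 * ‖e - (⟪a, e⟫ / ‖a‖ ^ 2) • a‖ ^ 2 = ‖a‖ ^ 2 * ‖e‖ ^ 2 - ⟪a, e⟫ ^ 2 := by
  rcases eq_or_ne a 0 with rfl | ha
  · simp
  · have hna : ‖a‖ ≠ 0 := norm_ne_zero_iff.mpr ha
    rw [norm_sub_sq_real, inner_smul_right, norm_smul, mul_pow, Real.norm_eq_abs, sq_abs,
      real_inner_comm]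
    field_simp
    ring

theorem sum_prod_mul_le_pow_mul_of_snoc {ι α : Type*} [Fintype ι] {p : ι → ℝ}
    (hp : ∀ j, 0 ≤ p j) {T : ι → α → α} {g : α → ℝ} {q : ℝ} (hq : 0 ≤ q)
    (hstep : ∀ x, ∑ j, p j * g (T j x) ≤ q * g x) {X : (k : ℕ) → (Fin k → ι) → α}
    (hX : ∀ k ω j, X (k + 1) (Fin.snoc ω j) = T j (X k ω)) (k : ℕ) :
    ∑ ω : Fin k → ι, (∏ i, p (ω i)) * g (X k ω) ≤ q ^ k * g (X 0 Fin.elim0) := by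
  induction k with
  | zero => simp [Subsingleton.elim _ (Fin.elim0 : Fin 0 → ι)]
  | succ k ih =>
    calc ∑ ω : Fin (k + 1) → ι, (∏ i, p (ω i)) * g (X (k + 1) ω)
        = ∑ ω : Fin k → ι, (∏ i, p (ω i)) * ∑ j, p j * g (T j (X k ω)) := by
          rw [← (Fin.snocEquiv fun _ => ι).sum_comp, Fintype.sum_prod_type, Finset.sum_comm]
          refine Finset.sum_congr rfl fun ω _ => ?_
          rw [Finset.mul_sum]
          refine Finset.sum_congr rfl fun j _ => ?_
          simp only [Fin.snocEquiv, Equiv.coe_fn_mk, Fin.prod_univ_castSucc, Fin.snoc_castSucc,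
            Fin.snoc_last, hX]
          ring
      _ ≤ ∑ ω : Fin k → ι, (∏ i, p (ω i)) * (q * g (X k ω)) :=
          Finset.sum_le_sum fun ω _ =>
            mul_le_mul_of_nonneg_left (hstep _) (Finset.prod_nonneg fun i _ => hp _)
      _ = q * ∑ ω : Fin k → ι, (∏ i, p (ω i)) * g (X k ω) := by
          rw [Finset.mul_sum]
          exact Finset.sum_congr rfl fun ω _ => by ring
      _ ≤ q ^ (k + 1) * g (X 0 Fin.elim0) := by
          rw [pow_succ', mul_assoc]
          exact mul_le_mul_of_nonneg_left ih hq

section Kaczmarz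

variable {m n : ℕ} (A : Matrix (Fin m) (Fin n) ℝ)

theorem mulE_apply (v : EuclideanSpace ℝ (Fin n)) (j : Fin m) : mulE A v j = ⟪rowE A j, v⟫ := by
  simp [mulE, rowE, Matrix.mulVec, dotProduct, PiLp.inner_apply, mul_comm]

theorem mulE_smul (c : ℝ) (v : EuclideanSpace ℝ (Fin n)) : mulE A (c • v) = c • mulE A v := by
  simp [mulE, Matrix.mulVec_smul]

theorem norm_mulE_sq (v : EuclideanSpace ℝ (Fin n)) :
    ‖mulE A v‖ ^ 2 = ∑ j, ⟪rowE A j, v⟫ ^ 2 := by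
  simp [EuclideanSpace.norm_sq_eq, mulE_apply]

theorem norm_mulE_sq_le (v : EuclideanSpace ℝ (Fin n)) :
    ‖mulE A v‖ ^ 2 ≤ (∑ l, ‖rowE A l‖ ^ 2) * ‖v‖ ^ 2 := by
  rw [norm_mulE_sq, Finset.sum_mul]
  gcongr with j
  rw [← mul_pow, ← sq_abs]
  gcongr
  exact abs_real_inner_le_norm _ _

theorem sminE_le {v : EuclideanSpace ℝ (Fin n)} (hv : ‖v‖ = 1) : sminE A ≤ ‖mulE A v‖ :=
  ciInf_le ⟨0, fun _ ⟨_, hu⟩ => hu ▸ norm_nonneg _⟩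
    (⟨v, hv⟩ : {v : EuclideanSpace ℝ (Fin n) // ‖v‖ = 1})

theorem sminE_nonneg : 0 ≤ sminE A :=
  Real.iInf_nonneg fun _ => norm_nonneg _

theorem sminE_mul_norm_le (v : EuclideanSpace ℝ (Fin n)) : sminE A * ‖v‖ ≤ ‖mulE A v‖ := by
  rcases eq_or_ne v 0 with rfl | hv
  · simp
  · have hnv : ‖v‖ ≠ 0 := norm_ne_zero_iff.mpr hv
    have hunit := sminE_le A (v := ‖v‖⁻¹ • v)
      (by rw [norm_smul, norm_inv, norm_norm, inv_mul_cancel₀ hnv])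
    rw [mulE_smul, norm_smul, norm_inv, norm_norm] at hunit
    rwa [le_inv_mul_iff₀ (by positivity), mul_comm] at hunit

theorem sminE_sq_le_sum_norm_rowE_sq : sminE A ^ 2 ≤ ∑ l, ‖rowE A l‖ ^ 2 := by
  rcases isEmpty_or_nonempty {v : EuclideanSpace ℝ (Fin n) // ‖v‖ = 1} with hempty | ⟨⟨u, hu⟩⟩
  · rw [sminE, Real.iInf_of_isEmpty, sq, zero_mul]
    positivity
  · calc sminE A ^ 2 = (sminE A * ‖u‖) ^ 2 := by rw [hu, mul_one]
      _ ≤ ‖mulE A u‖ ^ 2 := by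
          gcongr
          exacts [mul_nonneg (sminE_nonneg A) (norm_nonneg u), sminE_mul_norm_le A u]
      _ ≤ _ := by simpa [hu] using norm_mulE_sq_le A u

theorem sminE_sq_div_le_one : sminE A ^ 2 / ∑ l, ‖rowE A l‖ ^ 2 ≤ 1 :=
  div_le_one_of_le₀ (sminE_sq_le_sum_norm_rowE_sq A) (by positivity)

variable (b : Fin m → ℝ)

theorem kacStep_sub {j : Fin m} {xstar : EuclideanSpace ℝ (Fin n)} (h : ⟪rowE A j, xstar⟫ = b j)
    (x : EuclideanSpace ℝ (Fin n)) :
    kacStep A b j x - xstar =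
      (x - xstar) - (⟪rowE A j, x - xstar⟫ / ‖rowE A j‖ ^ 2) • rowE A j := by
  have hres : b j - ⟪rowE A j, x⟫ = -⟪rowE A j, x - xstar⟫ := by
    rw [inner_sub_right, h]
    ring
  rw [kacStep, hres, neg_div, neg_smul]
  abel

theorem sum_mul_norm_kacStep_sub_sq_le {xstar : EuclideanSpace ℝ (Fin n)}
    (hstar : ∀ j, ⟪rowE A j, xstar⟫ = b j) (x : EuclideanSpace ℝ (Fin n)) :
    ∑ j, ‖rowE A j‖ ^ 2 / (∑ l, ‖rowE A l‖ ^ 2) * ‖kacStep A b j x - xstar‖ ^ 2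
      ≤ (1 - sminE A ^ 2 / (∑ l, ‖rowE A l‖ ^ 2)) * ‖x - xstar‖ ^ 2 := by
  have hsum : ∑ j, ‖rowE A j‖ ^ 2 * ‖kacStep A b j x - xstar‖ ^ 2
      = (∑ l, ‖rowE A l‖ ^ 2) * ‖x - xstar‖ ^ 2 - ‖mulE A (x - xstar)‖ ^ 2 := by
    rw [norm_mulE_sq, Finset.sum_mul, ← Finset.sum_sub_distrib]
    refine Finset.sum_congr rfl fun j _ => ?_
    rw [kacStep_sub A b (hstar j), norm_sq_mul_norm_sub_inner_div_smul_sq]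
  have hsmin : sminE A ^ 2 * ‖x - xstar‖ ^ 2 ≤ ‖mulE A (x - xstar)‖ ^ 2 := by
    rw [← mul_pow]
    gcongr
    exacts [mul_nonneg (sminE_nonneg A) (norm_nonneg _), sminE_mul_norm_le A _]
  simp_rw [div_mul_eq_mul_div, ← Finset.sum_div, hsum]
  rcases (Finset.sum_nonneg fun l _ => sq_nonneg ‖rowE A l‖ :
    0 ≤ ∑ l, ‖rowE A l‖ ^ 2).eq_or_lt with hF0 | hFpos
  · -- all rows vanish, so every weight is `_ / 0 = 0`
    simp [← hF0]
  · rw [sub_div, mul_div_cancel_left₀ _ hFpos.ne', one_sub_mul, div_mul_eq_mul_div]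
    exact sub_le_sub_left (div_le_div_of_nonneg_right hsmin hFpos.le) _

theorem kacIter_succ_snoc (x0 : EuclideanSpace ℝ (Fin n)) (k : ℕ) (ω : Fin k → Fin m) (j : Fin m) :
    kacIter A b x0 (k + 1) (Fin.snoc ω j) = kacStep A b j (kacIter A b x0 k ω) := by
  simp [kacIter]

end Kaczmarz

theorem randomized_kaczmarz_exponential_convergence_general {m n : ℕ}
    (A : Matrix (Fin m) (Fin n) ℝ) (b : Fin m → ℝ)
    (xstar x0 : EuclideanSpace ℝ (Fin n))
    (hstar : ∀ j, ⟪rowE A j, xstar⟫ = b j) :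
    ∀ k : ℕ,
      ∑ ω : Fin k → Fin m,
          (∏ i : Fin k, ‖rowE A (ω i)‖ ^ 2 / (∑ l : Fin m, ‖rowE A l‖ ^ 2)) *
            ‖kacIter A b x0 k ω - xstar‖ ^ 2
        ≤ (1 - sminE A ^ 2 / (∑ l : Fin m, ‖rowE A l‖ ^ 2)) ^ k * ‖x0 - xstar‖ ^ 2 :=
  sum_prod_mul_le_pow_mul_of_snoc (p := fun j => ‖rowE A j‖ ^ 2 / ∑ l, ‖rowE A l‖ ^ 2)
    (g := fun x => ‖x - xstar‖ ^ 2) (fun _ => by positivity)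
    (sub_nonneg.mpr (sminE_sq_div_le_one A))
    (sum_mul_norm_kacStep_sub_sq_le A b hstar) (kacIter_succ_snoc A b x0)

/-- Strohmer–Vershynin: exponential convergence in expectation of the randomized
Kaczmarz algorithm, rows sampled i.i.d. with probabilities `‖a_j‖²/‖A‖_F²`. -/
theorem randomized_kaczmarz_exponential_convergence {m n : ℕ}
    (A : Matrix (Fin m) (Fin n) ℝ) (b : Fin m → ℝ)
    (xstar x0 : EuclideanSpace ℝ (Fin n))
    (hrank : A.rank = n) (hstar : ∀ j, ⟪rowE A j, xstar⟫ = b j) :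
    ∀ k : ℕ,
      ∑ ω : Fin k → Fin m,
          (∏ i : Fin k, ‖rowE A (ω i)‖ ^ 2 / (∑ l : Fin m, ‖rowE A l‖ ^ 2)) *
            ‖kacIter A b x0 k ω - xstar‖ ^ 2
        ≤ (1 - sminE A ^ 2 / (∑ l : Fin m, ‖rowE A l‖ ^ 2)) ^ k * ‖x0 - xstar‖ ^ 2 :=
  randomized_kaczmarz_exponential_convergence_general A b xstar x0 hstar
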